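/- arXiv:2106.00124 — 5 statements merged into one kernel-verified Lean document; each statement's English description precedes it below -/
import Mathlib

section
/- Let (M, ⊕, e) be a monoid, let a : ℕ → M, and let k ≥ 1 be a natural number. For every natural number x with k ∤ x, define the suffix-within-block value s(x) = a[x : k·(⌊x/k⌋ + 1)] and the prefix-within-block value p(x + k − 1) = a[k·⌊(x + k − 1)/k⌋ : x + k]. Then s(x) ⊕ p(x + k − 1) = a[x : x + k]; that is, the suffix of the length-k aligned block containing x combined with the prefix of the length-k aligned block containing x + k − 1 equals the reduction of the length-k window starting at x. -/
/-! Since `k ∤ x`, the block containing `x + k - 1` is the one right after the block of `x`, so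
both reductions meet at the block boundary `k * (x / k + 1) ∈ [x, x + k]` and the window
`[x, x + k)` splits there. -/

/-- Ordered reduction `a[l : r] = a l ⊕ a (l+1) ⊕ ⋯ ⊕ a (r-1)` over the
half-open interval `[l, r)`, equal to the identity when `r ≤ l`. -/
def orderedReduce {M : Type*} [Monoid M] (a : ℕ → M) (l r : ℕ) : M :=
  ((List.range' l (r - l)).map a).prod

theorem orderedReduce_mul_orderedReduce {M : Type*} [Monoid M] (a : ℕ → M) {l m r : ℕ}
    (hlm : l ≤ m) (hmr : m ≤ r) :
    orderedReduce a l m * orderedReduce a m r = orderedReduce a l r := by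
  obtain ⟨d, rfl⟩ := Nat.exists_eq_add_of_le hlm
  obtain ⟨e, rfl⟩ := Nat.exists_eq_add_of_le hmr
  simp only [orderedReduce, ← List.prod_append, ← List.map_append, Nat.add_sub_cancel_left,
    Nat.add_sub_add_left, add_assoc, List.range'_append_1]

theorem Nat.add_sub_one_div_of_not_dvd {k x : ℕ} (hk : 0 < k) (hx : ¬k ∣ x) :
    (x + k - 1) / k = x / k + 1 := by
  obtain ⟨n, rfl⟩ : ∃ n, x = n + 1 :=
    Nat.exists_eq_succ_of_ne_zero (by rintro rfl; exact hx (dvd_zero k))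
  rw [show n + 1 + k - 1 = n + k by omega, Nat.add_div_right n hk, Nat.succ_div_of_not_dvd hx]

/-- For `k ≥ 1` and `k ∤ x`, the within-block suffix at `x` combined with the
within-block prefix at `x + k - 1` equals the reduction of the length-`k`
window starting at `x`. -/
theorem bdbs_suffix_prefix_combine {M : Type*} [Monoid M] (a : ℕ → M)
    (k x : ℕ) (hk : 1 ≤ k) (hx : ¬ k ∣ x) :
    orderedReduce a x (k * (x / k + 1)) *
      orderedReduce a (k * ((x + k - 1) / k)) (x + k) =
    orderedReduce a x (x + k) := by
  rw [Nat.add_sub_one_div_of_not_dvd hk hx]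
  have hblock : k * (x / k + 1) ≤ x + k := by
    rw [mul_add, mul_one]
    exact Nat.add_le_add_right (Nat.mul_div_le x k) k
  exact orderedReduce_mul_orderedReduce a (Nat.lt_mul_div_succ x hk).le hblock
end

section
/- Let (M, ⊕, e) be a monoid, let a : ℕ → M, and let k ≥ 1 be a natural number. Define s(x) = a[x : k·(⌊x/k⌋ + 1)] and p(z) = a[k·⌊z/k⌋ : z + 1], and define the output A'(x) = s(x) if k ∣ x, and A'(x) = s(x) ⊕ p(x + k − 1) otherwise. Then for every natural number x, A'(x) = a[x : x + k]; that is, the bidirectional box-sum combination of within-block suffix and prefix values computes the reduction of every length-k window. -/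
theorem Nat.add_sub_one_div_eq_div_add_one_of_not_dvd {x k : ℕ} (hk : 0 < k) (hx : ¬k ∣ x) :
    (x + k - 1) / k = x / k + 1 := by
  have hdiv := Nat.div_add_mod x k
  have hmod_pos : 0 < x % k := Nat.pos_of_ne_zero (mt Nat.dvd_of_mod_eq_zero hx)
  have hmod_lt := Nat.mod_lt x hk
  apply Nat.div_eq_of_lt_le <;> rw [add_mul] <;> lia

/-- The bidirectional box-sum combination of within-block suffix and prefix
values computes the reduction of every length-`k` window. -/
theorem bdbs_1d_correct {M : Type*} [Monoid M] (a : ℕ → M) (k : ℕ)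
    (hk : 1 ≤ k) :
    ∀ x : ℕ,
      (let s : ℕ → M := fun x => orderedReduce a x (k * (x / k + 1))
       let p : ℕ → M := fun z => orderedReduce a (k * (z / k)) (z + 1)
       if k ∣ x then s x else s x * p (x + k - 1)) =
      orderedReduce a x (x + k) := by
  intro x
  dsimp only
  split_ifs with hdvd
  · obtain ⟨q, rfl⟩ := hdvd
    rw [Nat.mul_div_cancel_left q hk, mul_add_one]
  · have hx_le_end : x ≤ k * (x / k + 1) := (Nat.lt_mul_div_succ x hk).le
    have hend_le : k * (x / k + 1) ≤ x + k := by
      rw [mul_add_one]; exact Nat.add_le_add_right (Nat.mul_div_le x k) k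
    rw [Nat.add_sub_one_div_eq_div_add_one_of_not_dvd hk hdvd, Nat.sub_add_cancel (by omega)]
    exact orderedReduce_mul_orderedReduce a hx_le_end hend_le
end

section
/- Let (M, ⊕, e) be a commutative monoid, let d be a natural number, let n, x, k : Fin d → ℕ, and let A : (Fin d → ℕ) → M be a d-dimensional tensor. With U, B, P_i, and S_i as in the box-complement partition (U the coordinate domain, B the k-box cornered at x, P_i and S_i the prefix and suffix slabs for dimension i), the excluded sum ⊕_{y ∈ U \ B} A(y) equals the combination over i = 0, …, d−1 of (⊕_{y ∈ P_i} A(y)) ⊕ (⊕_{y ∈ S_i} A(y)). -/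
/-- The excluded sum over the complement of the `k`-box cornered at `x` within
the coordinate domain equals the combination over the dimensions of the
reductions over the prefix and suffix slabs. -/
theorem box_complement_sum {M : Type*} [CommMonoid M] (d : ℕ)
    (n x k : Fin d → ℕ) (A : (Fin d → ℕ) → M) :
    let U : Finset (Fin d → ℕ) := Fintype.piFinset fun i => Finset.range (n i)
    let B : Finset (Fin d → ℕ) :=
      U.filter fun y => ∀ i, x i ≤ y i ∧ y i < x i + k i
    let P : Fin d → Finset (Fin d → ℕ) := fun i =>
      U.filter fun y =>
        (∀ j, j < i → x j ≤ y j ∧ y j < x j + k j) ∧ y i < x i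
    let S : Fin d → Finset (Fin d → ℕ) := fun i =>
      U.filter fun y =>
        (∀ j, j < i → x j ≤ y j ∧ y j < x j + k j) ∧ x i + k i ≤ y i
    ∏ y ∈ U \ B, A y =
      ∏ i : Fin d, ((∏ y ∈ P i, A y) * ∏ y ∈ S i, A y) := by
  intro U B P S
  classical
  have hPS : ∀ i, Disjoint (P i) (S i) := by
    intro i
    simp only [P, S, Finset.disjoint_left, Finset.mem_filter]
    rintro y ⟨_, _, h1⟩ ⟨_, _, h2⟩
    omega
  have hT : ∀ i, (P i ∪ S i : Finset (Fin d → ℕ)) =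
      U.filter fun y => (∀ j, j < i → x j ≤ y j ∧ y j < x j + k j) ∧
        ¬(x i ≤ y i ∧ y i < x i + k i) := by
    intro i
    ext y
    simp only [P, S, Finset.mem_union, Finset.mem_filter]
    constructor
    · rintro (⟨hU, hj, h⟩ | ⟨hU, hj, h⟩) <;> exact ⟨hU, hj, by omega⟩
    · rintro ⟨hU, hj, h⟩
      by_cases hlt : y i < x i
      · exact Or.inl ⟨hU, hj, hlt⟩
      · exact Or.inr ⟨hU, hj, by omega⟩
  have key : ∀ i j : Fin d, i < j → Disjoint (P i ∪ S i) (P j ∪ S j) := by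
    intro i j hlt
    rw [hT i, hT j, Finset.disjoint_left]
    simp only [Finset.mem_filter]
    rintro y ⟨_, _, hbad⟩ ⟨_, hgood, _⟩
    exact hbad (hgood i hlt)
  have hdisj : ∀ i ∈ (Finset.univ : Finset (Fin d)), ∀ j ∈ Finset.univ, i ≠ j →
      Disjoint (P i ∪ S i) (P j ∪ S j) := by
    intro i _ j _ hij
    rcases lt_or_gt_of_ne hij with h | h
    · exact key i j h
    · exact (key j i h).symm
  calc ∏ y ∈ U \ B, A y
      = ∏ y ∈ Finset.univ.biUnion (fun i => P i ∪ S i), A y := by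
        congr 1
        ext y
        simp only [Finset.mem_sdiff, Finset.mem_biUnion, Finset.mem_univ, true_and]
        simp_rw [hT]
        simp only [B, Finset.mem_filter]
        constructor
        · rintro ⟨hU, hB⟩
          have hnf : ¬∀ i, x i ≤ y i ∧ y i < x i + k i := fun h => hB ⟨hU, h⟩
          obtain ⟨i0, hi0⟩ := not_forall.mp hnf
          set s := Finset.univ.filter fun i => ¬(x i ≤ y i ∧ y i < x i + k i) with hs
          have hne : s.Nonempty := ⟨i0, Finset.mem_filter.mpr ⟨Finset.mem_univ _, hi0⟩⟩
          refine ⟨s.min' hne, hU, ?_, ?_⟩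
          · intro j hj
            by_contra hjbad
            exact absurd (s.min'_le j (Finset.mem_filter.mpr ⟨Finset.mem_univ _, hjbad⟩))
              (not_le.mpr hj)
          · exact (Finset.mem_filter.mp (s.min'_mem hne)).2
        · rintro ⟨i, hU, _, hbad⟩
          exact ⟨hU, fun ⟨_, hall⟩ => hbad (hall i)⟩
    _ = ∏ i : Fin d, ∏ y ∈ P i ∪ S i, A y := Finset.prod_biUnion hdisj
    _ = ∏ i : Fin d, ((∏ y ∈ P i, A y) * ∏ y ∈ S i, A y) := by
        exact Finset.prod_congr rfl fun i _ => Finset.prod_union (hPS i)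
end

section
/- Let (M, ⊕, e) be a commutative monoid, let d be a natural number, let k : Fin d → ℕ, let A : (Fin d → ℕ) → M be a d-dimensional tensor, and let i ∈ Fin d. Suppose B : (Fin d → ℕ) → M satisfies, for every coordinate x, B(x) = ⊕ A(y) over all y with x j ≤ y j < x j + k j for every j < i and y j = x j for every j ≥ i (the included sum of A in the first i dimensions). Then the tensor (W_i B)(x) = ⊕_{t = x i}^{x i + k i − 1} B(x[i := t]) satisfies, for every x, (W_i B)(x) = ⊕ A(y) over all y with x j ≤ y j < x j + k j for every j ≤ i and y j = x j for every j > i; that is, one application of the one-dimensional window operator along dimension i extends the included sum from the first i dimensions to the first i + 1 dimensions. -/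
/-- One application of the one-dimensional window operator along dimension `i`
extends the included sum from the first `i` dimensions to the first `i + 1`
dimensions. -/
theorem window_extends_included_sum {M : Type*} [CommMonoid M] (d : ℕ)
    (k : Fin d → ℕ) (A B : (Fin d → ℕ) → M) (i : Fin d)
    (hB : ∀ x : Fin d → ℕ,
      B x = ∏ y ∈ Fintype.piFinset
          (fun j => if j < i then Finset.Ico (x j) (x j + k j) else {x j}),
        A y) :
    ∀ x : Fin d → ℕ,
      (∏ t ∈ Finset.Ico (x i) (x i + k i), B (Function.update x i t)) =
        ∏ y ∈ Fintype.piFinset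
            (fun j => if j ≤ i then Finset.Ico (x j) (x j + k j) else {x j}),
          A y := by
  intro x
  have hdis : ((Finset.Ico (x i) (x i + k i) : Finset ℕ) : Set ℕ).PairwiseDisjoint
      (fun t => Fintype.piFinset (fun j =>
        if j < i then Finset.Ico ((Function.update x i t) j)
          ((Function.update x i t) j + k j)
        else {(Function.update x i t) j})) := by
    intro t₁ _ t₂ _ hne
    simp only [Function.onFun, Finset.disjoint_left]
    intro y hy1 hy2
    simp only [Fintype.mem_piFinset] at hy1 hy2
    have h1 := hy1 i
    have h2 := hy2 i
    simp only [lt_irrefl, if_false, Function.update_self, Finset.mem_singleton] at h1 h2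
    exact hne (h1 ▸ h2)
  have hset : Fintype.piFinset
      (fun j => if j ≤ i then Finset.Ico (x j) (x j + k j) else {x j}) =
      (Finset.Ico (x i) (x i + k i)).biUnion (fun t =>
        Fintype.piFinset (fun j =>
          if j < i then Finset.Ico ((Function.update x i t) j)
            ((Function.update x i t) j + k j)
          else {(Function.update x i t) j})) := by
    ext y
    simp only [Fintype.mem_piFinset, Finset.mem_biUnion, Finset.mem_singleton]
    constructor
    · intro h
      have hi := h i
      simp only [le_refl, if_true] at hi
      refine ⟨y i, hi, fun j => ?_⟩
      by_cases hj : j < i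
      · have := h j
        simp only [hj, hj.le, if_true] at this ⊢
        rwa [Function.update_of_ne hj.ne]
      · simp only [hj, if_false]
        by_cases hji : j = i
        · subst hji; rw [Function.update_self]; exact Finset.mem_singleton_self _
        · rw [Function.update_of_ne hji]
          have := h j
          have : ¬ j ≤ i := fun hle => hji (le_antisymm hle (not_lt.mp hj))
          have hj' := h j
          simp only [this, if_false, Finset.mem_singleton] at hj'
          exact Finset.mem_singleton.mpr hj'
    · rintro ⟨t, ht, h⟩ j
      by_cases hj : j < i
      · have := h j
        simp only [hj, if_true, hj.le, Function.update_of_ne hj.ne] at this ⊢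
        exact this
      · by_cases hji : j = i
        · subst hji
          have := h j
          simp only [lt_irrefl, if_false, Finset.mem_singleton, Function.update_self,
            le_refl, if_true] at this ⊢
          rw [this]; exact ht
        · have hnle : ¬ j ≤ i := fun hle => hji (le_antisymm hle (not_lt.mp hj))
          have := h j
          simp only [hj, if_false, Function.update_of_ne hji, Finset.mem_singleton,
            hnle] at this ⊢
          exact this
  simp only [hB]
  rw [hset, Finset.prod_biUnion hdis]
end

section
/- Let (M, ⊕, e) be a commutative monoid, let n₁, n₂, x₁, x₂, k₁, k₂ be natural numbers, let A : ℕ × ℕ → M, let U = [0, n₁) × [0, n₂), let B = ([x₁, x₁ + k₁) × [x₂, x₂ + k₂)) ∩ U, and let R₁, R₂, R₃, R₄ be the four corner regions of the corners partition of U \ B. Then the excluded sum ⊕_{y ∈ U \ B} A(y) equals (⊕_{y ∈ R₁} A(y)) ⊕ (⊕_{y ∈ R₂} A(y)) ⊕ (⊕_{y ∈ R₃} A(y)) ⊕ (⊕_{y ∈ R₄} A(y)). -/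
/-- The excluded sum over the complement of a 2-dimensional box equals the
combination of the reductions over the four corner regions of the corners
algorithm. -/
theorem corners_excluded_sum {M : Type*} [CommMonoid M]
    (n₁ n₂ x₁ x₂ k₁ k₂ : ℕ) (A : ℕ × ℕ → M) :
    let U : Finset (ℕ × ℕ) := Finset.range n₁ ×ˢ Finset.range n₂
    let B : Finset (ℕ × ℕ) :=
      (Finset.Ico x₁ (x₁ + k₁) ×ˢ Finset.Ico x₂ (x₂ + k₂)) ∩ U
    let R₁ : Finset (ℕ × ℕ) := U.filter fun y => y.1 < x₁ ∧ y.2 < x₂ + k₂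
    let R₂ : Finset (ℕ × ℕ) := U.filter fun y => x₁ ≤ y.1 ∧ y.2 < x₂
    let R₃ : Finset (ℕ × ℕ) := U.filter fun y => x₁ + k₁ ≤ y.1 ∧ x₂ ≤ y.2
    let R₄ : Finset (ℕ × ℕ) := U.filter fun y => y.1 < x₁ + k₁ ∧ x₂ + k₂ ≤ y.2
    ∏ y ∈ U \ B, A y =
      (∏ y ∈ R₁, A y) * (∏ y ∈ R₂, A y) * (∏ y ∈ R₃, A y) *
        ∏ y ∈ R₄, A y := by
  intro U B R₁ R₂ R₃ R₄
  have h12 : Disjoint R₁ R₂ := by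
    simp only [R₁, R₂, Finset.disjoint_left, Finset.mem_filter]
    rintro ⟨a, b⟩ ⟨_, h1, _⟩ ⟨_, h2, _⟩; omega
  have h13 : Disjoint R₁ R₃ := by
    simp only [R₁, R₃, Finset.disjoint_left, Finset.mem_filter]
    rintro ⟨a, b⟩ ⟨_, h1, _⟩ ⟨_, h2, _⟩; omega
  have h14 : Disjoint R₁ R₄ := by
    simp only [R₁, R₄, Finset.disjoint_left, Finset.mem_filter]
    rintro ⟨a, b⟩ ⟨_, _, h1⟩ ⟨_, _, h2⟩; omega
  have h23 : Disjoint R₂ R₃ := by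
    simp only [R₂, R₃, Finset.disjoint_left, Finset.mem_filter]
    rintro ⟨a, b⟩ ⟨_, _, h1⟩ ⟨_, _, h2⟩; omega
  have h24 : Disjoint R₂ R₄ := by
    simp only [R₂, R₄, Finset.disjoint_left, Finset.mem_filter]
    rintro ⟨a, b⟩ ⟨_, _, h1⟩ ⟨_, _, h2⟩; omega
  have h34 : Disjoint R₃ R₄ := by
    simp only [R₃, R₄, Finset.disjoint_left, Finset.mem_filter]
    rintro ⟨a, b⟩ ⟨_, h1, _⟩ ⟨_, h2, _⟩; omega
  have hU : U \ B = R₁ ∪ R₂ ∪ R₃ ∪ R₄ := by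
    ext ⟨a, b⟩
    simp only [U, B, R₁, R₂, R₃, R₄, Finset.mem_sdiff, Finset.mem_union,
      Finset.mem_filter, Finset.mem_inter, Finset.mem_product,
      Finset.mem_range, Finset.mem_Ico]
    omega
  rw [hU, Finset.prod_union (by
      simp only [Finset.disjoint_union_left]
      exact ⟨⟨h14, h24⟩, h34⟩),
    Finset.prod_union (by simp only [Finset.disjoint_union_left]; exact ⟨h13, h23⟩),
    Finset.prod_union h12]
end
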